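/- For fixed 0 < p₁ < p₂ < 1, lim_{α→∞} (α/(α−1) − (1−p₁)^{−1/α})/((1−p₁)^{−1/α} − (1−p₂)^{−1/α}) = −(ln(1−p₁)+1)/(ln(1−p₁) − ln(1−p₂)). That is, the Pareto recombined-mean correction factor converges to the exponential one as the shape parameter tends to infinity. -/

import Mathlib

open Filter Real

lemma aux_exp_lim (c : ℝ) :
    Tendsto (fun α : ℝ => α * (Real.exp (c / α) - 1)) atTop (nhds c) := by
  have h : HasDerivAt (fun x : ℝ => Real.exp (c * x)) c 0 := by
    have := ((hasDerivAt_id (0:ℝ)).const_mul c).exp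
    simpa using this
  have hs := hasDerivAt_iff_tendsto_slope.mp h
  have h1 : Tendsto (fun α : ℝ => (1:ℝ)/α) atTop (nhdsWithin 0 {0}ᶜ) := by
    apply tendsto_nhdsWithin_of_tendsto_nhds_of_eventually_within
    · simpa [one_div] using tendsto_inv_atTop_zero
    · filter_upwards [eventually_gt_atTop (0:ℝ)] with α hα
      simp [one_div, inv_ne_zero (ne_of_gt hα)]
  refine (hs.comp h1).congr' ?_
  filter_upwards [eventually_gt_atTop (0:ℝ)] with α hα
  have hα' : α ≠ 0 := ne_of_gt hα
  simp only [Function.comp, slope_def_field]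
  field_simp
  simp only [mul_zero, Real.exp_zero]
  ring

lemma aux_ratio_lim : Tendsto (fun α : ℝ => α / (α - 1)) atTop (nhds 1) := by
  have h1 : Tendsto (fun α : ℝ => α - 1) atTop atTop := by
    simpa [sub_eq_add_neg] using tendsto_atTop_add_const_right atTop (-1 : ℝ) tendsto_id
  have h2 : Tendsto (fun α : ℝ => (α - 1)⁻¹) atTop (nhds 0) := h1.inv_tendsto_atTop
  have h : Tendsto (fun α : ℝ => 1 + (α - 1)⁻¹) atTop (nhds (1 + 0)) :=
    tendsto_const_nhds.add h2
  rw [add_zero] at h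
  refine h.congr' ?_
  filter_upwards [eventually_gt_atTop (1:ℝ)] with α hα
  have : α - 1 ≠ 0 := sub_ne_zero.mpr (ne_of_gt hα)
  field_simp
  ring

theorem stmt_4 (p₁ p₂ : ℝ) (hp₁ : 0 < p₁) (hp₁₂ : p₁ < p₂) (hp₂ : p₂ < 1) :
    Tendsto
      (fun α : ℝ =>
        (α / (α - 1) - (1 - p₁) ^ (-1 / α)) /
          ((1 - p₁) ^ (-1 / α) - (1 - p₂) ^ (-1 / α)))
      atTop
      (nhds (-(Real.log (1 - p₁) + 1) / (Real.log (1 - p₁) - Real.log (1 - p₂)))) := by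
  have h1pos : (0:ℝ) < 1 - p₁ := by linarith
  have h2pos : (0:ℝ) < 1 - p₂ := by linarith
  set L₁ := Real.log (1 - p₁) with hL₁
  set L₂ := Real.log (1 - p₂) with hL₂
  have hLlt : L₂ < L₁ := Real.log_lt_log h2pos (by linarith)
  have hrw : ∀ᶠ α : ℝ in atTop,
      (1 - p₁) ^ (-1 / α) = Real.exp ((-L₁) / α) ∧
      (1 - p₂) ^ (-1 / α) = Real.exp ((-L₂) / α) := by
    filter_upwards [eventually_gt_atTop (0:ℝ)] with α hα
    constructor <;>
      rw [Real.rpow_def_of_pos (by linarith)] <;> ring_nf <;> simp only [hL₁, hL₂, mul_comm]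
  have hf : Tendsto (fun α : ℝ => α * (α / (α - 1) - (1 - p₁) ^ (-1 / α)))
      atTop (nhds (1 - -L₁)) := by
    have h := aux_ratio_lim.sub (aux_exp_lim (-L₁))
    refine h.congr' ?_
    filter_upwards [hrw, eventually_gt_atTop (1:ℝ)] with α hα hα1
    rw [hα.1]
    have h0 : α ≠ 0 := by positivity
    have h1 : α - 1 ≠ 0 := sub_ne_zero.mpr (ne_of_gt hα1)
    field_simp
    ring
  have hg : Tendsto (fun α : ℝ => α * ((1 - p₁) ^ (-1 / α) - (1 - p₂) ^ (-1 / α)))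
      atTop (nhds (-L₁ - -L₂)) := by
    have h := (aux_exp_lim (-L₁)).sub (aux_exp_lim (-L₂))
    refine h.congr' ?_
    filter_upwards [hrw] with α hα
    rw [hα.1, hα.2]; ring
  have hne : -L₁ - -L₂ ≠ 0 := by intro hc; apply absurd hLlt; intro; linarith
  have h := hf.div hg hne
  have heq : (1 - -L₁) / (-L₁ - -L₂) = -(L₁ + 1) / (L₁ - L₂) := by
    rw [div_eq_div_iff hne (sub_ne_zero.mpr (ne_of_gt hLlt))]
    ring
  rw [heq] at h
  refine h.congr' ?_
  filter_upwards [eventually_gt_atTop (0:ℝ)] with α hα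
  exact mul_div_mul_left _ _ (ne_of_gt hα)
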